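/- arXiv:2312.13916 — 2 statements merged into one kernel-verified Lean document; each statement's English description precedes it below -/
import Mathlib

section
/- For every n ≥ 1, the map sending a subgroup Γ̄ of PSL(2,ℤ) of index n to the pair (σ, α) of permutations of the n-element coset space PSL(2,ℤ)/Γ̄ induced by left multiplication by ST and by S induces a bijection between the set of conjugacy classes of index-n subgroups of PSL(2,ℤ) and the set of equivalence classes of pairs (σ, α) of permutations of an n-element set with σ³ = id, α² = id and the subgroup generated by σ and α acting transitively, where two pairs are equivalent if they are simultaneously conjugate by a bijection of the underlying sets. -/
open Matrix

/-- `SL(2,ℤ)`: the group of 2×2 integer matrices of determinant 1. -/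
abbrev SL2Z := Matrix.SpecialLinearGroup (Fin 2) ℤ

instance : Fact (Even (Fintype.card (Fin 2))) := ⟨by simp⟩

/-- The subgroup `{±I}` of `SL(2,ℤ)`. -/
def pmOne : Subgroup SL2Z := Subgroup.zpowers (-1 : SL2Z)

instance : pmOne.Normal := by
  constructor
  intro x hx g
  obtain ⟨n, rfl⟩ := hx
  have h : Commute ((-1 : SL2Z) ^ n) g := (Commute.neg_one_left g).zpow_left n
  refine ⟨n, ?_⟩
  rw [← h.eq, mul_assoc, mul_inv_cancel, mul_one]

/-- `PSL(2,ℤ)`, the modular group, as the quotient of `SL(2,ℤ)` by `{±I}`. -/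
abbrev PSL2Z := SL2Z ⧸ pmOne

/-- The natural projection `ξ : SL(2,ℤ) → PSL(2,ℤ)`. -/
def xi : SL2Z →* PSL2Z := QuotientGroup.mk' pmOne

/-- The element `S` of `PSL(2,ℤ)`, the image of `[[0,-1],[1,0]]`. -/
def Sp : PSL2Z := xi ⟨!![0, -1; 1, 0], by norm_num [Matrix.det_fin_two_of]⟩

/-- The element `T` of `PSL(2,ℤ)`, the image of `[[1,1],[0,1]]`. -/
def Tp : PSL2Z := xi ⟨!![1, 1; 0, 1], by norm_num [Matrix.det_fin_two_of]⟩

/-- The number of left cosets in `PSL(2,ℤ)/Γ` fixed by `g` (for the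
left-multiplication action).  For `g = S` this is `e₂(Γ)`, for `g = S*T` it is `e₃(Γ)`. -/
noncomputable def nFix (g : PSL2Z) (Γ : Subgroup PSL2Z) : ℕ :=
  Nat.card {x : PSL2Z ⧸ Γ // g • x = x}

/-- The number of orbits of the cyclic subgroup generated by `g` on `PSL(2,ℤ)/Γ`.
For `g = S, S*T, T` these are `c₂(Γ), c₃(Γ), h(Γ)` respectively. -/
noncomputable def nOrb (g : PSL2Z) (Γ : Subgroup PSL2Z) : ℕ :=
  Nat.card (MulAction.orbitRel.Quotient (Subgroup.zpowers g) (PSL2Z ⧸ Γ))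

/-- `Γ` has genus zero: `c₂(Γ) + c₃(Γ) + h(Γ) = index(Γ) + 2`. -/
def GenusZero (Γ : Subgroup PSL2Z) : Prop :=
  nOrb Sp Γ + nOrb (Sp * Tp) Γ + nOrb Tp Γ = Γ.index + 2

/-- `Γ` is torsion free: it contains no nontrivial element of finite order. -/
def TorsionFree (Γ : Subgroup PSL2Z) : Prop :=
  ∀ x ∈ Γ, x ≠ 1 → ¬ IsOfFinOrder x

/-- Two subgroups of a group are conjugate. -/
def SubgroupConj {G : Type*} [Group G] (H K : Subgroup G) : Prop :=
  ∃ g : G, Subgroup.map (MulAut.conj g).toMonoidHom H = K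

/-- The number of conjugacy classes of subgroups of `PSL(2,ℤ)` satisfying `P`. -/
noncomputable def countClasses (P : Subgroup PSL2Z → Prop) : ℕ :=
  Nat.card (Quot fun A B : {Γ : Subgroup PSL2Z // P Γ} => SubgroupConj A.1 B.1)

/-- The index of the torsion free subgroup `Γ^tf` associated to `Γ`:
`index(Γ) + 3·e₂(Γ) + 2·e₃(Γ)`. -/
noncomputable def tfIdx (Γ : Subgroup PSL2Z) : ℕ :=
  Γ.index + 3 * nFix Sp Γ + 2 * nFix (Sp * Tp) Γ

/-- A hypermap of size `n`: permutations `σ, α` of an `n`-element set with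
`σ³ = 1`, `α² = 1`, generating a transitive subgroup. -/
structure Hypermap (n : ℕ) where
  sigma : Equiv.Perm (Fin n)
  alpha : Equiv.Perm (Fin n)
  sigma_cube : sigma ^ 3 = 1
  alpha_sq : alpha ^ 2 = 1
  trans : ∀ x y : Fin n, ∃ g ∈ Subgroup.closure ({sigma, alpha} : Set (Equiv.Perm (Fin n))), g x = y

/-- Equivalence of hypermaps: simultaneous conjugation. -/
def HypermapEquiv {n : ℕ} (M N : Hypermap n) : Prop :=
  ∃ ψ : Equiv.Perm (Fin n),
    (∀ x, ψ (M.sigma x) = N.sigma (ψ x)) ∧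
    (∀ x, ψ (M.alpha x) = N.alpha (ψ x))


/-!
A subgroup `Γ` of index `n` yields the transitive action of `PSL(2,ℤ)` on the `n` cosets of `Γ`,
and a transitive action on `n` points yields the stabilizer of a point. Conjugate subgroups give
isomorphic actions, and isomorphic transitive actions give conjugate stabilizers, because the
stabilizers of two points of a transitive action are conjugate; the two constructions are inverse
up to these equivalences.

`PSL(2,ℤ)` is the free product of `⟨ST⟩ ≅ C₃` and `⟨S⟩ ≅ C₂`: by ping-pong on the upper half
plane, `ST` and `(ST)²` map `Re z > 0` into `Re z < 0` and `S` maps `Re z < 0` into `Re z > 0`.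
Hence an action on `n` points is the same thing as a pair `(σ, α)` with `σ³ = α² = 1`, and both
transitivity and isomorphism of actions can be checked on the generators `ST` and `S`.
-/

section PermRep

variable {G X : Type*} [Group G]

def PermRepIso (φ ψ : G →* Equiv.Perm X) : Prop :=
  ∃ π : X ≃ X, ∀ g x, π (φ g x) = ψ g (π x)

lemma PermRepIso.symm {φ ψ : G →* Equiv.Perm X} (h : PermRepIso φ ψ) : PermRepIso ψ φ := by
  obtain ⟨π, hπ⟩ := h
  exact ⟨π.symm, fun g x => by rw [π.symm_apply_eq, hπ, π.apply_symm_apply]⟩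

abbrev TransitivePermRep (G X : Type*) [Group G] :=
  {φ : G →* Equiv.Perm X // ∀ x y, ∃ g, φ g x = y}

def repStabilizer (φ : G →* Equiv.Perm X) (p : X) : Subgroup G :=
  (MulAction.stabilizer (Equiv.Perm X) p).comap φ

lemma mem_repStabilizer {φ : G →* Equiv.Perm X} {p : X} {g : G} :
    g ∈ repStabilizer φ p ↔ φ g p = p := Iff.rfl

lemma repStabilizer_apply (φ : G →* Equiv.Perm X) (g : G) (p : X) :
    repStabilizer φ (φ g p) = (repStabilizer φ p).map (MulAut.conj g).toMonoidHom := by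
  ext k
  rw [Subgroup.mem_map_equiv, mem_repStabilizer, mem_repStabilizer, MulAut.conj_symm_apply,
    map_mul, map_mul, map_inv, Equiv.Perm.mul_apply, Equiv.Perm.mul_apply,
    Equiv.Perm.inv_eq_iff_eq]

lemma repStabilizer_eq_of_intertwining {φ ψ : G →* Equiv.Perm X} {π : X ≃ X}
    (hπ : ∀ g x, π (φ g x) = ψ g (π x)) (p : X) :
    repStabilizer ψ (π p) = repStabilizer φ p := by
  ext g
  rw [mem_repStabilizer, mem_repStabilizer, ← hπ, π.injective.eq_iff]

lemma subgroupConj_repStabilizer {φ ψ : G →* Equiv.Perm X} (hφ : ∀ x y, ∃ g, φ g x = y)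
    (h : PermRepIso φ ψ) (p : X) : SubgroupConj (repStabilizer φ p) (repStabilizer ψ p) := by
  obtain ⟨π, hπ⟩ := h
  obtain ⟨g, hg⟩ := hφ p (π.symm p)
  refine ⟨g, ?_⟩
  rw [← repStabilizer_apply, hg, ← repStabilizer_eq_of_intertwining hπ, π.apply_symm_apply]

lemma apply_eq_apply_iff_inv_mul_mem_repStabilizer {φ : G →* Equiv.Perm X} {p : X} {a b : G} :
    φ a p = φ b p ↔ a⁻¹ * b ∈ repStabilizer φ p := by
  rw [mem_repStabilizer, map_mul, map_inv, Equiv.Perm.mul_apply, Equiv.Perm.inv_eq_iff_eq, eq_comm]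

noncomputable def quotientRepStabilizerEquiv {φ : G →* Equiv.Perm X}
    (hφ : ∀ x y, ∃ g, φ g x = y) (p : X) : G ⧸ repStabilizer φ p ≃ X :=
  Equiv.ofBijective
    (Quotient.lift (fun g => φ g p) fun _ _ hab =>
      apply_eq_apply_iff_inv_mul_mem_repStabilizer.mpr (QuotientGroup.leftRel_apply.mp hab))
    ⟨fun a b => Quotient.inductionOn₂ a b fun _ _ hab =>
      QuotientGroup.eq.mpr (apply_eq_apply_iff_inv_mul_mem_repStabilizer.mp hab),
     fun x => let ⟨g, hg⟩ := hφ p x; ⟨g, hg⟩⟩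

lemma quotientRepStabilizerEquiv_mk {φ : G →* Equiv.Perm X}
    (hφ : ∀ x y, ∃ g, φ g x = y) (p : X) (g : G) :
    quotientRepStabilizerEquiv hφ p g = φ g p := rfl

lemma quotientRepStabilizerEquiv_smul {φ : G →* Equiv.Perm X}
    (hφ : ∀ x y, ∃ g, φ g x = y) (p : X) (g : G) (q : G ⧸ repStabilizer φ p) :
    quotientRepStabilizerEquiv hφ p (g • q) = φ g (quotientRepStabilizerEquiv hφ p q) :=
  QuotientGroup.induction_on q fun k => by
    rw [MulAction.Quotient.smul_mk, quotientRepStabilizerEquiv_mk, quotientRepStabilizerEquiv_mk,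
      smul_eq_mul, map_mul, Equiv.Perm.mul_apply]

lemma index_repStabilizer {φ : G →* Equiv.Perm X} (hφ : ∀ x y, ∃ g, φ g x = y) (p : X) :
    (repStabilizer φ p).index = Nat.card X := by
  rw [Subgroup.index_eq_card, Nat.card_congr (quotientRepStabilizerEquiv hφ p)]

lemma stabilizer_quotientGroup_mk (H : Subgroup G) (k : G) :
    MulAction.stabilizer G (k : G ⧸ H) = H.map (MulAut.conj k).toMonoidHom := by
  have := MulAction.stabilizer_smul_eq_stabilizer_map_conj k ((1 : G) : G ⧸ H)
  rwa [MulAction.stabilizer_quotient, MulAction.Quotient.smul_mk, smul_eq_mul, mul_one] at this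

def cosetRep {H : Subgroup G} (e : X ≃ G ⧸ H) : G →* Equiv.Perm X :=
  (Equiv.permCongrHom e.symm).toMonoidHom.comp (MulAction.toPermHom G (G ⧸ H))

lemma cosetRep_apply {H : Subgroup G} (e : X ≃ G ⧸ H) (g : G) (x : X) :
    cosetRep e g x = e.symm (g • e x) := rfl

lemma cosetRep_transitive {H : Subgroup G} (e : X ≃ G ⧸ H) (x y : X) : ∃ g, cosetRep e g x = y :=
  (MulAction.exists_smul_eq G (e x) (e y)).imp fun g hg => by
    rw [cosetRep_apply, hg, e.symm_apply_apply]

lemma repStabilizer_cosetRep {H : Subgroup G} (e : X ≃ G ⧸ H) (p : X) :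
    repStabilizer (cosetRep e) p = MulAction.stabilizer G (e p) := by
  ext g
  rw [mem_repStabilizer, cosetRep_apply, e.symm_apply_eq, MulAction.mem_stabilizer_iff]

lemma subgroupConj_repStabilizer_cosetRep {H : Subgroup G} (e : X ≃ G ⧸ H) (p : X) :
    SubgroupConj H (repStabilizer (cosetRep e) p) := by
  obtain ⟨k, hk⟩ := QuotientGroup.mk_surjective (e p)
  exact ⟨k, by rw [repStabilizer_cosetRep, ← hk, stabilizer_quotientGroup_mk]⟩

lemma permRepIso_cosetRep {φ : G →* Equiv.Perm X} (hφ : ∀ x y, ∃ g, φ g x = y) {p : X}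
    {H : Subgroup G} (hH : repStabilizer φ p = H) (e : X ≃ G ⧸ H) :
    PermRepIso (cosetRep e) φ := by
  subst hH
  refine ⟨e.trans (quotientRepStabilizerEquiv hφ p), fun g x => ?_⟩
  rw [Equiv.trans_apply, Equiv.trans_apply, cosetRep_apply, e.apply_symm_apply,
    quotientRepStabilizerEquiv_smul]

lemma permRepIso_cosetRep_of_subgroupConj {H K : Subgroup G} (hHK : SubgroupConj H K)
    (e : X ≃ G ⧸ H) (e' : X ≃ G ⧸ K) : PermRepIso (cosetRep e) (cosetRep e') := by
  obtain ⟨g, hg⟩ := hHK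
  refine (permRepIso_cosetRep (cosetRep_transitive e) (p := e.symm g) ?_ e').symm
  rw [repStabilizer_cosetRep, e.apply_symm_apply, stabilizer_quotientGroup_mk, hg]

lemma intertwining_of_closure_eq_top {S : Set G} (hS : Subgroup.closure S = ⊤)
    {φ ψ : G →* Equiv.Perm X} {π : X ≃ X} (h : ∀ s ∈ S, ∀ x, π (φ s x) = ψ s (π x)) (g : G)
    (x : X) : π (φ g x) = ψ g (π x) := by
  have hconj : (MulAut.conj π).toMonoidHom.comp φ = ψ :=
    MonoidHom.eq_of_eqOn_dense hS fun s hs => Equiv.ext fun y => by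
      simpa using h s hs (π.symm y)
  simpa using DFunLike.congr_fun (DFunLike.congr_fun hconj g) (π x)

variable [Finite X] {n : ℕ}

lemma nonempty_equiv_quotient (hX : Nat.card X = n) (p : X) {H : Subgroup G}
    (hH : H.index = n) : Nonempty (X ≃ G ⧸ H) := by
  have hcard : Nat.card (G ⧸ H) = Nat.card X := by rw [← Subgroup.index_eq_card, hH, hX]
  have : Finite (G ⧸ H) :=
    Nat.finite_of_card_ne_zero (hcard ▸ (Nat.card_pos_iff.mpr ⟨⟨p⟩, ‹_›⟩).ne')
  exact Finite.card_eq.mp hcard.symm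

noncomputable def subgroupClassesEquivPermRepClasses (hX : Nat.card X = n) (p : X) :
    Quot (fun H K : {H : Subgroup G // H.index = n} => SubgroupConj H.1 K.1) ≃
      Quot (fun φ ψ : TransitivePermRep G X => PermRepIso φ.1 ψ.1) where
  toFun := Quot.lift
    (fun H => Quot.mk _ ⟨cosetRep (nonempty_equiv_quotient hX p H.2).some, cosetRep_transitive _⟩)
    fun _ _ h => Quot.sound (permRepIso_cosetRep_of_subgroupConj h _ _)
  invFun := Quot.lift
    (fun φ => Quot.mk _ ⟨repStabilizer φ.1 p, (index_repStabilizer φ.2 p).trans hX⟩)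
    fun φ _ h => Quot.sound (subgroupConj_repStabilizer φ.2 h p)
  left_inv := Quot.ind fun H =>
    (Quot.sound (a := H) (subgroupConj_repStabilizer_cosetRep _ p)).symm
  right_inv := Quot.ind fun φ => Quot.sound (b := φ) (permRepIso_cosetRep φ.2 rfl _)

end PermRep

section FreeProductC3C2

variable {G : Type*} [Group G]

def cyclicLift (n : ℕ) (g : G) (hg : g ^ n = 1) : Multiplicative (ZMod n) →* G :=
  AddMonoidHom.toMultiplicativeLeft <| ZMod.lift n
    ⟨zmultiplesHom (Additive G) (Additive.ofMul g), by simpa using congrArg Additive.ofMul hg⟩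

lemma cyclicLift_ofAdd_one (n : ℕ) (g : G) (hg : g ^ n = 1) :
    cyclicLift n g hg (Multiplicative.ofAdd 1) = g := by
  have := ZMod.lift_coe n
    ⟨zmultiplesHom (Additive G) (Additive.ofMul g), by simpa using congrArg Additive.ofMul hg⟩ 1
  simp only [Int.cast_one] at this
  simp [cyclicLift, this]

-- The free factors of `PSL(2,ℤ)`: `C₃ ≅ ⟨ST⟩` at `false` and `C₂ ≅ ⟨S⟩` at `true`.
abbrev CyclicFactor (b : Bool) : Type := Multiplicative (ZMod (cond b 2 3))

lemma eq_ofAdd_one_or_sq_of_ne_one :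
    ∀ h : Multiplicative (ZMod 3), h ≠ 1 → h = .ofAdd 1 ∨ h = .ofAdd 1 ^ 2 := by
  decide

lemma eq_ofAdd_one_of_ne_one : ∀ h : Multiplicative (ZMod 2), h ≠ 1 → h = .ofAdd 1 := by
  decide

variable (σ α : G) (hσ : σ ^ 3 = 1) (hα : α ^ 2 = 1)

def factorLift : ∀ b, CyclicFactor b →* G := fun b =>
  cyclicLift (cond b 2 3) (cond b α σ) (by cases b <;> assumption)

lemma factorLift_false_ofAdd_one : factorLift σ α hσ hα false (.ofAdd 1) = σ :=
  cyclicLift_ofAdd_one _ _ _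

lemma factorLift_true_ofAdd_one : factorLift σ α hσ hα true (.ofAdd 1) = α :=
  cyclicLift_ofAdd_one _ _ _

lemma lift_factorLift_of_false :
    Monoid.CoprodI.lift (factorLift σ α hσ hα) (.of (i := false) (.ofAdd 1)) = σ := by
  rw [Monoid.CoprodI.lift_of, factorLift_false_ofAdd_one]

lemma lift_factorLift_of_true :
    Monoid.CoprodI.lift (factorLift σ α hσ hα) (.of (i := true) (.ofAdd 1)) = α := by
  rw [Monoid.CoprodI.lift_of, factorLift_true_ofAdd_one]

end FreeProductC3C2

section PSL2ZPresentation

open ModularGroup UpperHalfPlane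

lemma Sp_eq_xi_S : Sp = xi S := rfl

lemma Tp_eq_xi_T : Tp = xi T := rfl

lemma xi_neg_one : xi (-1) = 1 :=
  (QuotientGroup.eq_one_iff _).mpr (Subgroup.mem_zpowers _)

lemma Sp_sq : Sp ^ 2 = 1 := by
  rw [Sp_eq_xi_S, ← map_pow, show (S : SL2Z) ^ 2 = -1 by decide, xi_neg_one]

lemma SpTp_pow_three : (Sp * Tp) ^ 3 = 1 := by
  rw [Sp_eq_xi_S, Tp_eq_xi_T, ← map_mul, ← map_pow, show (S * T : SL2Z) ^ 3 = -1 by decide,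
    xi_neg_one]

lemma SpTp_sq : (Sp * Tp) ^ 2 = Tp⁻¹ * Sp := by
  have hS : Sp⁻¹ = Sp := inv_eq_of_mul_eq_one_right (by rw [← sq, Sp_sq])
  calc (Sp * Tp) ^ 2 = (Sp * Tp)⁻¹ :=
        eq_inv_of_mul_eq_one_left (by rw [← pow_succ, SpTp_pow_three])
    _ = Tp⁻¹ * Sp := by rw [_root_.mul_inv_rev, hS]

lemma closure_SpTp_Sp : Subgroup.closure {Sp * Tp, Sp} = ⊤ := by
  rw [eq_top_iff, ← Subgroup.map_top_of_surjective xi (QuotientGroup.mk'_surjective pmOne),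
    ← SpecialLinearGroup.SL2Z_generators, MonoidHom.map_closure, Subgroup.closure_le,
    Set.image_pair, ← Sp_eq_xi_S, ← Tp_eq_xi_T, Set.pair_subset_iff]
  have hST : Sp * Tp ∈ Subgroup.closure {Sp * Tp, Sp} := Subgroup.subset_closure (by simp)
  have hS : Sp ∈ Subgroup.closure {Sp * Tp, Sp} := Subgroup.subset_closure (by simp)
  exact ⟨hS, by
    simpa only [← mul_assoc, ← sq, Sp_sq, one_mul, SetLike.mem_coe] using mul_mem hS hST⟩

lemma closure_pair_eq_range {H : Type*} [Group H] (φ : PSL2Z →* H) :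
    Subgroup.closure {φ (Sp * Tp), φ Sp} = φ.range := by
  rw [← Set.image_pair, ← MonoidHom.map_closure, closure_SpTp_Sp, MonoidHom.range_eq_map]

noncomputable def pslToPermUpperHalfPlane : PSL2Z →* Equiv.Perm ℍ :=
  QuotientGroup.lift pmOne (MulAction.toPermHom SL2Z ℍ) <| by
    rw [pmOne, Subgroup.zpowers_le, MonoidHom.mem_ker]
    exact Equiv.ext fun z => (SL_neg_smul 1 z).trans (one_smul _ z)

noncomputable instance : MulAction PSL2Z ℍ := MulAction.compHom ℍ pslToPermUpperHalfPlane

lemma xi_smul (g : SL2Z) (z : ℍ) : xi g • z = g • z := rfl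

lemma re_S_smul (z : ℍ) : (S • z).re = -z.re / Complex.normSq z := by
  rw [modular_S_smul]
  change ((-(z : ℂ))⁻¹).re = _
  rw [Complex.inv_re, Complex.normSq_neg, Complex.neg_re]
  rfl

lemma re_SpTp_smul_neg {z : ℍ} (hz : 0 < z.re) : ((Sp * Tp) • z).re < 0 := by
  rw [Sp_eq_xi_S, Tp_eq_xi_T, ← map_mul, xi_smul, mul_smul, re_S_smul, re_T_smul]
  exact div_neg_of_neg_of_pos (by linarith) (normSq_pos _)

lemma re_SpTp_sq_smul_neg {z : ℍ} (hz : 0 < z.re) : ((Sp * Tp) ^ 2 • z).re < 0 := by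
  rw [SpTp_sq, Sp_eq_xi_S, Tp_eq_xi_T, ← map_inv, ← map_mul, xi_smul, mul_smul, re_T_inv_smul,
    re_S_smul, neg_div]
  linarith [div_pos hz (normSq_pos z)]

lemma re_Sp_smul_pos {z : ℍ} (hz : z.re < 0) : 0 < (Sp • z).re := by
  rw [Sp_eq_xi_S, xi_smul, re_S_smul]
  exact div_pos (by linarith) (normSq_pos _)

noncomputable def coprodToPSL : Monoid.CoprodI CyclicFactor →* PSL2Z :=
  Monoid.CoprodI.lift (factorLift (Sp * Tp) Sp SpTp_pow_three Sp_sq)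

lemma coprodToPSL_injective : Function.Injective coprodToPSL := by
  refine Monoid.CoprodI.lift_injective_of_ping_pong _
    (Or.inr ⟨false, by simp [Cardinal.mk_fintype]⟩)
    (fun b => cond b {z : ℍ | 0 < z.re} {z | z.re < 0}) ?_ ?_ ?_
  · rintro (_ | _)
    · exact ⟨T⁻¹ • I, show (T⁻¹ • I).re < 0 by rw [re_T_inv_smul, I_re]; norm_num⟩
    · exact ⟨T • I, show 0 < (T • I).re by rw [re_T_smul, I_re]; norm_num⟩
  · rintro (_ | _) (_ | _) h <;> simp only [ne_eq, not_true_eq_false] at h <;>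
      simp only [Function.onFun, cond_true, cond_false, Set.disjoint_left, Set.mem_ofPred_eq] <;>
      intro z h1 h2 <;> linarith
  · rintro (_ | _) (_ | _) hij h hh <;> simp only [ne_eq, not_true_eq_false] at hij <;>
      rintro _ ⟨z, hz, rfl⟩
    · rcases eq_ofAdd_one_or_sq_of_ne_one h hh with rfl | rfl
      · change (factorLift _ _ _ _ false (.ofAdd 1) • z).re < 0
        rw [factorLift_false_ofAdd_one]
        exact re_SpTp_smul_neg hz
      · change (factorLift _ _ _ _ false (.ofAdd 1 ^ 2) • z).re < 0
        rw [map_pow, factorLift_false_ofAdd_one]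
        exact re_SpTp_sq_smul_neg hz
    · rw [eq_ofAdd_one_of_ne_one h hh]
      change 0 < (factorLift _ _ _ _ true (.ofAdd 1) • z).re
      rw [factorLift_true_ofAdd_one]
      exact re_Sp_smul_pos hz

lemma coprodToPSL_surjective : Function.Surjective coprodToPSL := by
  rw [← MonoidHom.range_eq_top, eq_top_iff, ← closure_SpTp_Sp, Subgroup.closure_le,
    Set.pair_subset_iff]
  exact ⟨⟨_, lift_factorLift_of_false _ _ _ _⟩, ⟨_, lift_factorLift_of_true _ _ _ _⟩⟩

noncomputable def coprodEquivPSL : Monoid.CoprodI CyclicFactor ≃* PSL2Z :=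
  MulEquiv.ofBijective coprodToPSL ⟨coprodToPSL_injective, coprodToPSL_surjective⟩

lemma coprodEquivPSL_of_false : coprodEquivPSL (.of (i := false) (.ofAdd 1)) = Sp * Tp :=
  lift_factorLift_of_false (Sp * Tp) Sp SpTp_pow_three Sp_sq

lemma coprodEquivPSL_of_true : coprodEquivPSL (.of (i := true) (.ofAdd 1)) = Sp :=
  lift_factorLift_of_true (Sp * Tp) Sp SpTp_pow_three Sp_sq

variable {G : Type*} [Group G] (σ α : G) (hσ : σ ^ 3 = 1) (hα : α ^ 2 = 1)

noncomputable def pslLift : PSL2Z →* G :=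
  (Monoid.CoprodI.lift (factorLift σ α hσ hα)).comp coprodEquivPSL.symm.toMonoidHom

lemma pslLift_SpTp : pslLift σ α hσ hα (Sp * Tp) = σ := by
  rw [pslLift, MonoidHom.comp_apply, MulEquiv.coe_toMonoidHom,
    coprodEquivPSL.symm_apply_eq.mpr coprodEquivPSL_of_false.symm,
    lift_factorLift_of_false]

lemma pslLift_Sp : pslLift σ α hσ hα Sp = α := by
  rw [pslLift, MonoidHom.comp_apply, MulEquiv.coe_toMonoidHom,
    coprodEquivPSL.symm_apply_eq.mpr coprodEquivPSL_of_true.symm,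
    lift_factorLift_of_true]

end PSL2ZPresentation

section Hypermaps

variable {n : ℕ}

noncomputable def Hypermap.toPermRep (M : Hypermap n) : PSL2Z →* Equiv.Perm (Fin n) :=
  pslLift M.sigma M.alpha M.sigma_cube M.alpha_sq

lemma Hypermap.toPermRep_SpTp (M : Hypermap n) : M.toPermRep (Sp * Tp) = M.sigma :=
  pslLift_SpTp _ _ _ _

lemma Hypermap.toPermRep_Sp (M : Hypermap n) : M.toPermRep Sp = M.alpha :=
  pslLift_Sp _ _ _ _

lemma Hypermap.toPermRep_transitive (M : Hypermap n) (x y : Fin n) :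
    ∃ g, M.toPermRep g x = y := by
  obtain ⟨π, hπ, rfl⟩ := M.trans x y
  have hrange := closure_pair_eq_range M.toPermRep
  rw [M.toPermRep_SpTp, M.toPermRep_Sp] at hrange
  obtain ⟨g, rfl⟩ := hrange ▸ hπ
  exact ⟨g, rfl⟩

def hypermapOfPermRep (φ : TransitivePermRep PSL2Z (Fin n)) : Hypermap n where
  sigma := φ.1 (Sp * Tp)
  alpha := φ.1 Sp
  sigma_cube := by rw [← map_pow, SpTp_pow_three, map_one]
  alpha_sq := by rw [← map_pow, Sp_sq, map_one]
  trans x y := by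
    obtain ⟨g, hg⟩ := φ.2 x y
    exact ⟨φ.1 g, closure_pair_eq_range φ.1 ▸ ⟨g, rfl⟩, hg⟩

noncomputable def hypermapEquivTransitivePermRep :
    Hypermap n ≃ TransitivePermRep PSL2Z (Fin n) where
  toFun M := ⟨M.toPermRep, M.toPermRep_transitive⟩
  invFun := hypermapOfPermRep
  left_inv M := by
    cases M
    simp only [hypermapOfPermRep, Hypermap.toPermRep, pslLift_SpTp, pslLift_Sp]
  right_inv φ := Subtype.ext <| MonoidHom.eq_of_eqOn_dense closure_SpTp_Sp <| by
    rintro _ (rfl | rfl)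
    exacts [Hypermap.toPermRep_SpTp _, Hypermap.toPermRep_Sp _]

lemma hypermapEquiv_iff_permRepIso (M N : Hypermap n) :
    HypermapEquiv M N ↔ PermRepIso M.toPermRep N.toPermRep := by
  refine exists_congr fun π => ⟨fun ⟨hσ, hα⟩ => intertwining_of_closure_eq_top closure_SpTp_Sp ?_,
    fun h => ⟨?_, ?_⟩⟩
  · rintro _ (rfl | rfl)
    · simpa only [Hypermap.toPermRep_SpTp] using hσ
    · simpa only [Hypermap.toPermRep_Sp] using hα
  · simpa only [Hypermap.toPermRep_SpTp] using h (Sp * Tp)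
  · simpa only [Hypermap.toPermRep_Sp] using h Sp

end Hypermaps

/-- Conjugacy classes of index-`n` subgroups of `PSL(2,ℤ)` are in bijection with
equivalence classes of hypermaps of size `n`, the bijection being induced by the
left-multiplication action of `ST` and `S` on the coset space. -/
theorem conj_classes_equiv_hypermaps (n : ℕ) (hn : 1 ≤ n) :
    ∃ f : Quot (fun A B : {Γ : Subgroup PSL2Z // Γ.index = n} => SubgroupConj A.1 B.1) ≃
        Quot (fun M N : Hypermap n => HypermapEquiv M N),
      ∀ (Γ : Subgroup PSL2Z) (hΓ : Γ.index = n),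
        ∃ (M : Hypermap n) (e : Fin n ≃ PSL2Z ⧸ Γ),
          f (Quot.mk _ ⟨Γ, hΓ⟩) = Quot.mk _ M ∧
          (∀ x, e (M.sigma x) = (Sp * Tp) • e x) ∧
          (∀ x, e (M.alpha x) = Sp • e x) := by
  let p : Fin n := ⟨0, hn⟩
  refine ⟨(subgroupClassesEquivPermRepClasses (Nat.card_fin n) p).trans
    (Quot.congr hypermapEquivTransitivePermRep hypermapEquiv_iff_permRepIso).symm,
    fun Γ hΓ => ?_⟩
  let e := (nonempty_equiv_quotient (Nat.card_fin n) p hΓ).some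
  exact ⟨hypermapOfPermRep ⟨cosetRep e, cosetRep_transitive e⟩, e, rfl,
    fun x => e.apply_symm_apply _, fun x => e.apply_symm_apply _⟩
end

section
/- If Γ̄ is a finite-index subgroup of PSL(2,ℤ) of index n and of genus zero, then 6 divides n + 3·e₂(Γ̄) + 2·e₃(Γ̄), and writing n + 3·e₂(Γ̄) + 2·e₃(Γ̄) = 6k one has e₂(Γ̄) + e₃(Γ̄) ≤ k + 1. -/
/-!
Every nonidentity element of a cyclic group of prime order `p` has the same fixed points as a
generator, so Burnside's lemma for `⟨g⟩` acting on a finite set `X` reads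
`|X| + (p - 1)·|Fix g| = p·#orbits`. For `S` and `ST`, of orders 2 and 3, acting on the cosets
this gives `n + e₂ = 2c₂` and `n + 2e₃ = 3c₃`; substituted into `c₂ + c₃ + h = n + 2` they yield
`n + 3e₂ + 2e₃ = 6(e₂ + e₃ + h - 2)`, and `h ≥ 1`.
-/

open Matrix

namespace MulAction

variable {G X : Type*} [Group G] [MulAction G X] {g : G}

theorem fixedBy_eq_of_ne_one_of_prime_orderOf (hg : (orderOf g).Prime) {h : Subgroup.zpowers g}
    (h1 : h ≠ 1) : fixedBy X h = fixedBy X g := by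
  have : Fact (orderOf g).Prime := ⟨hg⟩
  obtain ⟨j, hj⟩ : (⟨g, Subgroup.mem_zpowers g⟩ : Subgroup.zpowers g) ∈ Subgroup.zpowers h :=
    mem_zpowers_of_prime_card (Nat.card_zpowers g) h1
  obtain ⟨i, hi⟩ := h.2
  have hj' : (h : G) ^ j = g := congrArg Subtype.val hj
  change fixedBy X (h : G) = _
  apply subset_antisymm
  · simpa only [hj'] using fixedBy_subset_fixedBy_zpow X (h : G) j
  · simpa only [hi] using fixedBy_subset_fixedBy_zpow X g i

theorem card_add_mul_card_fixedBy_eq_mul_card_orbits [Finite X] (hg : (orderOf g).Prime) :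
    Nat.card X + (orderOf g - 1) * Nat.card (fixedBy X g)
      = orderOf g * Nat.card (orbitRel.Quotient (Subgroup.zpowers g) X) := by
  classical
  let H := Subgroup.zpowers g
  have : Finite H := Nat.finite_of_card_ne_zero (by rw [Nat.card_zpowers]; exact hg.ne_zero)
  have : Fintype H := Fintype.ofFinite H
  have : Fintype X := Fintype.ofFinite X
  have burnside := sum_card_fixedBy_eq_card_orbits_mul_card_group H X
  simp only [Fintype.card_eq_nat_card] at burnside
  rw [← Finset.add_sum_erase _ _ (Finset.mem_univ 1),
    Finset.sum_congr rfl fun h hh => by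
      rw [fixedBy_eq_of_ne_one_of_prime_orderOf hg (Finset.ne_of_mem_erase hh)],
    Finset.sum_const, Finset.card_erase_of_mem (Finset.mem_univ 1), Finset.card_univ,
    Fintype.card_eq_nat_card, Nat.card_zpowers, fixedBy_one_eq_univ, smul_eq_mul,
    Nat.card_univ] at burnside
  rw [burnside, mul_comm]

end MulAction

theorem eq_one_or_eq_neg_one_of_mem_pmOne {x : SL2Z} (hx : x ∈ pmOne) : x = 1 ∨ x = -1 := by
  obtain ⟨n, rfl⟩ := hx
  rcases n.even_or_odd with hn | hn
  · exact .inl hn.neg_one_zpow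
  · exact .inr hn.neg_one_zpow

theorem xi_ne_one_of_apply_zero_zero {x : SL2Z} (hx : (x : Matrix (Fin 2) (Fin 2) ℤ) 0 0 = 0) :
    xi x ≠ 1 := by
  intro h
  rcases eq_one_or_eq_neg_one_of_mem_pmOne ((QuotientGroup.eq_one_iff x).mp h) with rfl | rfl <;>
    simp at hx

theorem orderOf_Sp : orderOf Sp = 2 :=
  orderOf_eq_prime ((map_pow xi _ 2).symm.trans ((QuotientGroup.eq_one_iff _).mpr ⟨1, by decide⟩))
    (xi_ne_one_of_apply_zero_zero rfl)

theorem orderOf_Sp_mul_Tp : orderOf (Sp * Tp) = 3 :=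
  orderOf_eq_prime ((map_pow xi _ 3).symm.trans ((QuotientGroup.eq_one_iff _).mpr ⟨1, by decide⟩))
    (xi_ne_one_of_apply_zero_zero rfl)

section Cosets

variable (Γ : Subgroup PSL2Z) [Γ.FiniteIndex]

theorem index_add_mul_nFix_eq_mul_nOrb {g : PSL2Z} (hg : (orderOf g).Prime) :
    Γ.index + (orderOf g - 1) * nFix g Γ = orderOf g * nOrb g Γ := by
  rw [Γ.index_eq_card]
  exact MulAction.card_add_mul_card_fixedBy_eq_mul_card_orbits hg

theorem one_le_nOrb (g : PSL2Z) : 1 ≤ nOrb g Γ := Nat.card_pos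

theorem tfIdx_add_twelve_of_genusZero (hg : GenusZero Γ) :
    tfIdx Γ + 12 = 6 * (nFix Sp Γ + nFix (Sp * Tp) Γ + nOrb Tp Γ) := by
  have h2 := index_add_mul_nFix_eq_mul_nOrb Γ (orderOf_Sp ▸ Nat.prime_two)
  have h3 := index_add_mul_nFix_eq_mul_nOrb Γ (orderOf_Sp_mul_Tp ▸ Nat.prime_three)
  rw [orderOf_Sp] at h2
  rw [orderOf_Sp_mul_Tp] at h3
  unfold GenusZero at hg
  unfold tfIdx
  omega

end Cosets

/-- For a genus zero subgroup `Γ` of finite index `n`: `6 ∣ n + 3e₂ + 2e₃`, and if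
`n + 3e₂ + 2e₃ = 6k` then `e₂ + e₃ ≤ k + 1`. -/
theorem tfIdx_div_six_and_bound (Γ : Subgroup PSL2Z) (hfi : Γ.index ≠ 0)
    (hg : GenusZero Γ) :
    6 ∣ tfIdx Γ ∧
    ∀ k : ℕ, tfIdx Γ = 6 * k → nFix Sp Γ + nFix (Sp * Tp) Γ ≤ k + 1 := by
  have : Γ.FiniteIndex := ⟨hfi⟩
  have hsum := tfIdx_add_twelve_of_genusZero Γ hg
  have hcusp := one_le_nOrb Γ Tp
  exact ⟨by omega, fun k hk => by omega⟩
end
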